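/- arXiv:2605.24242 — 2 statements merged into one kernel-verified Lean document; each statement's English description precedes it below -/
import Mathlib

section
/- Let A_0, ..., A_Q be pairwise distinct real numbers with A_0 = 0, let C > 0 and G_q > 0 with G_0 = 1. Define v_q(τ) = ∑_{r=0}^q C^{q-r} G_r ∑_{i=r}^q e^{A_i τ} / ∏_{j=r, j≠i}^q (A_i - A_j). Then v_0(τ) = 1, v_q(0) = G_q for each q, and for each q ≥ 1 and τ, v_q'(τ) = A_q v_q(τ) + C v_{q-1}(τ). -/
open Real Finset

open Polynomial in
lemma sum_inv_prod_sub_aux {s : Finset ℕ} {A : ℕ → ℝ} (hs : s.Nonempty)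
    (hinj : Set.InjOn A s) :
    ∑ i ∈ s, (∏ j ∈ s.erase i, (A i - A j))⁻¹ = if s.card = 1 then 1 else 0 := by
  have h1 := Lagrange.sum_basis hinj hs
  have h2 := congrArg (fun p => Polynomial.coeff p (s.card - 1)) h1
  simp only [Polynomial.finset_sum_coeff] at h2
  have hb : ∀ i ∈ s, (Lagrange.basis s A i).coeff (s.card - 1)
      = (∏ j ∈ s.erase i, (A i - A j))⁻¹ := by
    intro i hi
    have hnd := Lagrange.natDegree_basis hinj hi
    rw [← hnd, Polynomial.coeff_natDegree]
    rw [Lagrange.basis, Polynomial.leadingCoeff_prod, ← Finset.prod_inv_distrib]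
    refine Finset.prod_congr rfl fun j hj => ?_
    have hne : A i ≠ A j := by
      intro h
      exact (Finset.mem_erase.mp hj).1.symm (hinj hi (Finset.mem_of_mem_erase hj) h)
    rw [Lagrange.basisDivisor, Polynomial.leadingCoeff_mul, Polynomial.leadingCoeff_C,
      Polynomial.leadingCoeff_X_sub_C, mul_one]
  rw [Finset.sum_congr rfl hb] at h2
  rw [h2, Polynomial.coeff_one]
  have hc := hs.card_pos
  have h3 : s.card - 1 = 0 ↔ s.card = 1 := by omega
  simp [h3]

/-- The explicit divided-difference formula solves the non-degenerate
triangular ODE system `v_q' = A_q v_q + C v_{q-1}`, `v_q(0) = G_q`, `v_0 ≡ 1`. -/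
theorem explicit_formula_solves_triangular_system
    (Q : ℕ) (A : ℕ → ℝ) (hA0 : A 0 = 0)
    (hdist : ∀ i ≤ Q, ∀ j ≤ Q, i ≠ j → A i ≠ A j)
    (C : ℝ) (hC : 0 < C) (G : ℕ → ℝ) (hG : ∀ q ≤ Q, 0 < G q) (hG0 : G 0 = 1)
    (v : ℕ → ℝ → ℝ)
    (hv : ∀ q τ, v q τ = ∑ r ∈ Finset.range (q + 1), C ^ (q - r) * G r *
      ∑ i ∈ Finset.Icc r q,
        Real.exp (A i * τ) / ∏ j ∈ (Finset.Icc r q).erase i, (A i - A j)) :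
    (∀ τ : ℝ, v 0 τ = 1) ∧
    (∀ q ≤ Q, v q 0 = G q) ∧
    (∀ q, 1 ≤ q → q ≤ Q → ∀ τ : ℝ,
      deriv (v q) τ = A q * v q τ + C * v (q - 1) τ) := by
  have hANe : ∀ i ≤ Q, ∀ j ≤ Q, i ≠ j → A i - A j ≠ 0 := fun i hi j hj hij =>
    sub_ne_zero.mpr (hdist i hi j hj hij)
  have key : ∀ r q : ℕ, r ≤ q → q ≤ Q →
      ∑ i ∈ Finset.Icc r q, (∏ j ∈ (Finset.Icc r q).erase i, (A i - A j))⁻¹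
        = if r = q then 1 else 0 := by
    intro r q hrq hqQ
    have hne : (Finset.Icc r q).Nonempty := ⟨r, Finset.mem_Icc.mpr ⟨le_refl r, hrq⟩⟩
    have hinj : Set.InjOn A (Finset.Icc r q) := by
      intro i hi j hj hij
      simp only [Finset.coe_Icc, Set.mem_Icc] at hi hj
      by_contra h
      exact hdist i (le_trans hi.2 hqQ) j (le_trans hj.2 hqQ) h hij
    rw [sum_inv_prod_sub_aux hne hinj, Nat.card_Icc]
    have h3 : q + 1 - r = 1 ↔ r = q := by omega
    simp [h3]
  refine ⟨?_, ?_, ?_⟩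
  · intro τ
    simp [hv 0 τ, hA0, hG0]
  · intro q hq
    rw [hv q 0]
    have hterm : ∀ r ∈ Finset.range (q + 1), C ^ (q - r) * G r *
        ∑ i ∈ Finset.Icc r q,
          Real.exp (A i * 0) / ∏ j ∈ (Finset.Icc r q).erase i, (A i - A j)
        = if r = q then G q else 0 := by
      intro r hr
      simp only [mul_zero, Real.exp_zero, one_div]
      rw [key r q (by simpa using Nat.lt_succ_iff.mp (Finset.mem_range.mp hr)) hq]
      by_cases h : r = q <;> simp [h]
    rw [Finset.sum_congr rfl hterm, Finset.sum_ite_eq' (Finset.range (q + 1)) q fun _ => G q]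
    simp
  · intro q hq1 hqQ τ
    obtain ⟨p, rfl⟩ : ∃ p, q = p + 1 := ⟨q - 1, by omega⟩
    have hvq : v (p + 1) = fun t => ∑ r ∈ Finset.range (p + 2), C ^ (p + 1 - r) * G r *
        ∑ i ∈ Finset.Icc r (p + 1),
          Real.exp (A i * t) / ∏ j ∈ (Finset.Icc r (p + 1)).erase i, (A i - A j) :=
      funext (hv (p + 1))
    -- derivative
    have hd : HasDerivAt (v (p + 1))
        (∑ r ∈ Finset.range (p + 2), C ^ (p + 1 - r) * G r *
          ∑ i ∈ Finset.Icc r (p + 1),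
            Real.exp (A i * τ) * A i / ∏ j ∈ (Finset.Icc r (p + 1)).erase i, (A i - A j)) τ := by
      rw [hvq]
      apply HasDerivAt.fun_sum
      intro r _
      apply HasDerivAt.const_mul
      apply HasDerivAt.fun_sum
      intro i _
      have h := (((hasDerivAt_id τ).const_mul (A i)).exp).div_const
        (∏ j ∈ (Finset.Icc r (p + 1)).erase i, (A i - A j))
      simpa [mul_one] using h
    rw [hd.deriv, hv (p + 1) τ]
    have hp1 : p + 1 - 1 = p := by omega
    rw [hp1, hv p τ]
    -- split each derivative term
    have split : ∀ r ∈ Finset.range (p + 2),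
        C ^ (p + 1 - r) * G r * ∑ i ∈ Finset.Icc r (p + 1),
          Real.exp (A i * τ) * A i / ∏ j ∈ (Finset.Icc r (p + 1)).erase i, (A i - A j)
        = A (p + 1) * (C ^ (p + 1 - r) * G r * ∑ i ∈ Finset.Icc r (p + 1),
            Real.exp (A i * τ) / ∏ j ∈ (Finset.Icc r (p + 1)).erase i, (A i - A j))
          + C ^ (p + 1 - r) * G r * ∑ i ∈ Finset.Icc r (p + 1),
            (A i - A (p + 1)) * Real.exp (A i * τ)
              / ∏ j ∈ (Finset.Icc r (p + 1)).erase i, (A i - A j) := by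
      intro r _
      have : ∀ i ∈ Finset.Icc r (p + 1),
          Real.exp (A i * τ) * A i / ∏ j ∈ (Finset.Icc r (p + 1)).erase i, (A i - A j)
          = A (p + 1) * (Real.exp (A i * τ)
              / ∏ j ∈ (Finset.Icc r (p + 1)).erase i, (A i - A j))
            + (A i - A (p + 1)) * Real.exp (A i * τ)
              / ∏ j ∈ (Finset.Icc r (p + 1)).erase i, (A i - A j) := by
        intro i _
        ring
      rw [Finset.sum_congr rfl this, Finset.sum_add_distrib, ← Finset.mul_sum]
      ring
    rw [Finset.sum_congr rfl split, Finset.sum_add_distrib, ← Finset.mul_sum]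
    congr 1
    -- the correction sum equals C * v p τ
    rw [Finset.sum_range_succ]
    have hlast : C ^ (p + 1 - (p + 1)) * G (p + 1) * ∑ i ∈ Finset.Icc (p + 1) (p + 1),
        (A i - A (p + 1)) * Real.exp (A i * τ)
          / ∏ j ∈ (Finset.Icc (p + 1) (p + 1)).erase i, (A i - A j) = 0 := by
      simp
    rw [hlast, add_zero, Finset.mul_sum]
    refine Finset.sum_congr rfl fun r hr => ?_
    have hrp : r ≤ p := Nat.lt_succ_iff.mp (Finset.mem_range.mp hr)
    have hIcc : Finset.Icc r (p + 1) = insert (p + 1) (Finset.Icc r p) := by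
      exact (Finset.insert_Icc_right_eq_Icc_add_one (by omega)).symm
    have hnotmem : (p + 1) ∉ Finset.Icc r p := by simp
    have hinner : ∑ i ∈ Finset.Icc r (p + 1),
        (A i - A (p + 1)) * Real.exp (A i * τ)
          / ∏ j ∈ (Finset.Icc r (p + 1)).erase i, (A i - A j)
        = ∑ i ∈ Finset.Icc r p,
            Real.exp (A i * τ) / ∏ j ∈ (Finset.Icc r p).erase i, (A i - A j) := by
      rw [hIcc, Finset.sum_insert hnotmem]
      simp only [sub_self, zero_mul, zero_div, zero_add]
      refine Finset.sum_congr rfl fun i hi => ?_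
      have hip : i ≤ p := (Finset.mem_Icc.mp hi).2
      have hne : i ≠ p + 1 := by omega
      rw [Finset.erase_insert_of_ne (Ne.symm hne),
        Finset.prod_insert (fun h => hnotmem (Finset.mem_of_mem_erase h))]
      have hsub : A i - A (p + 1) ≠ 0 := hANe i (by omega) (p + 1) (by omega) hne
      rw [mul_div_mul_left _ _ hsub]
    rw [hinner]
    have hpow : C ^ (p + 1 - r) = C * C ^ (p - r) := by
      have : p + 1 - r = (p - r) + 1 := by omega
      rw [this, pow_succ]
      ring
    rw [hpow]
    ring
end

section
/- Let h : [0,T]×{0,...,Q} → ℝ with h(t,q) = (b/κ) log w(t,q) for positive w, where κ > 0, b > 0. Suppose for q ≥ 1 that w satisfies ∂_t w(t,q) + A_q w(t,q) + C w(t,q-1) = 0 with C = λ exp(-κa/b - 1), λ > 0, a ≥ 0, and A_q = (κ/b) g q for some g ∈ ℝ. Then h satisfies ∂_t h(t,q) + g q + (λb/(eκ)) exp(-κa/b - (κ/b)(h(t,q) - h(t,q-1))) = 0. -/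
open Real

/-- The logarithmic transformation `h = (b/κ) log w` turns the linear triangular
system for `w` into the nonlinear reduced HJB equation for `h` (Case I). -/
theorem log_transform_HJB_equivalence
    (κ b lam a g : ℝ) (hκ : 0 < κ) (hb : 0 < b) (hlam : 0 < lam) (ha : 0 ≤ a)
    (C : ℝ) (hCdef : C = lam * Real.exp (-κ * a / b - 1))
    (A : ℕ → ℝ) (hAdef : ∀ q : ℕ, A q = (κ / b) * g * q)
    (w : ℝ → ℕ → ℝ) (hwpos : ∀ t q, 0 < w t q)
    (hwdiff : ∀ q, Differentiable ℝ (fun t => w t q))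
    (hwlin : ∀ t : ℝ, ∀ q : ℕ, 1 ≤ q →
      deriv (fun t => w t q) t + A q * w t q + C * w t (q - 1) = 0)
    (h : ℝ → ℕ → ℝ) (hdef : ∀ t q, h t q = (b / κ) * Real.log (w t q)) :
    ∀ t : ℝ, ∀ q : ℕ, 1 ≤ q →
      deriv (fun t => h t q) t + g * q
        + (lam * b / (Real.exp 1 * κ))
            * Real.exp (-κ * a / b - (κ / b) * (h t q - h t (q - 1))) = 0 := by
  intro t q hq
  have hW : 0 < w t q := hwpos t q
  have hW' : 0 < w t (q - 1) := hwpos t (q - 1)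
  have hne : w t q ≠ 0 := hW.ne'
  have hder : HasDerivAt (fun t => w t q) (deriv (fun t => w t q) t) t :=
    ((hwdiff q) t).hasDerivAt
  have hlog : HasDerivAt (fun t => Real.log (w t q))
      (deriv (fun t => w t q) t / w t q) t := hder.log hne
  have hh : deriv (fun t => h t q) t
      = (b / κ) * (deriv (fun t => w t q) t / w t q) := by
    have heq : (fun t => h t q) = fun t => (b / κ) * Real.log (w t q) :=
      funext fun t => hdef t q
    rw [heq]
    exact (hlog.const_mul (b / κ)).deriv
  have hderiv_w : deriv (fun t => w t q) t = -(A q * w t q + C * w t (q - 1)) := by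
    have := hwlin t q hq; linarith
  have hexp : Real.exp (-κ * a / b - κ / b * (h t q - h t (q - 1)))
      = Real.exp (-κ * a / b) * (w t (q - 1) / w t q) := by
    rw [hdef, hdef]
    have h1 : κ / b * ((b / κ) * Real.log (w t q) - (b / κ) * Real.log (w t (q - 1)))
        = Real.log (w t q) - Real.log (w t (q - 1)) := by
      field_simp
    rw [h1, Real.exp_sub, Real.exp_sub, Real.exp_log hW, Real.exp_log hW']
    field_simp
  rw [hh, hderiv_w, hexp, hAdef, hCdef, Real.exp_sub]
  have he : Real.exp (1 : ℝ) ≠ 0 := (Real.exp_pos 1).ne'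
  field_simp
  ring
end
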